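/- Let (A,V,χ,F,ν) be a crossed product system with preunit, assume F is a cocycle satisfying the twisted module condition, and let R be a k-subalgebra of A that is stable under χ, i.e. χ(v⊗r) ∈ R⊗V for all v ∈ V, r ∈ R. Then γ(V)j_ν(R) ⊆ (R⊗V) ∩ E = j_ν(R)γ(V), where R⊗V denotes the image of R⊗_k V in A⊗_k V, E := A×V, γ(V)j_ν(R) is the k-span of {μ_E(γ(v)⊗j_ν(r)) : v ∈ V, r ∈ R}, and j_ν(R)γ(V) is the k-span of {μ_E(j_ν(r)⊗γ(v)) : r ∈ R, v ∈ V}. -/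
import Mathlib


open TensorProduct

noncomputable section

namespace WeakCrossedProduct

variable {k : Type*} [Field k]
variable {A : Type*} [Ring A] [Algebra k A]
variable {V : Type*} [AddCommGroup V] [Module k V]

/-- The map `A ⊗ₖ (A ⊗ₖ V) → A ⊗ₖ V`, `a ⊗ x ↦ a • x`, i.e. `μ_A ⊗ id_V`. -/
def actMap : A ⊗[k] (A ⊗[k] V) →ₗ[k] A ⊗[k] V :=
  TensorProduct.lift (LinearMap.mk₂ k (fun (a : A) (x : A ⊗[k] V) => a • x)
    (fun a b x => add_smul a b x)
    (fun c a x => smul_assoc c a x)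
    (fun a x y => smul_add a x y)
    (fun c a x => smul_comm a c x))

/-- Given `g : V → A ⊗ V`, the map `A ⊗ V → A ⊗ V`, `a ⊗ u ↦ a • g u`. -/
def smulMap (g : V →ₗ[k] A ⊗[k] V) : A ⊗[k] V →ₗ[k] A ⊗[k] V :=
  TensorProduct.lift (LinearMap.mk₂ k (fun (a : A) (u : V) => a • g u)
    (fun a b u => add_smul a b (g u))
    (fun c a u => smul_assoc c a (g u))
    (fun a u u' => show a • g (u + u') = a • g u + a • g u' by
      rw [map_add, smul_add])
    (fun c a u => show a • g (c • u) = c • (a • g u) by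
      rw [map_smul]; exact smul_comm a c (g u)))

/-- The right action of `a' ∈ A` on `A ⊗ V`: `(a ⊗ v) · a' := a • χ (v ⊗ a')`. -/
def ract (χ : V ⊗[k] A →ₗ[k] A ⊗[k] V) (a' : A) : A ⊗[k] V →ₗ[k] A ⊗[k] V :=
  smulMap (χ ∘ₗ (TensorProduct.mk k V A).flip a')

/-- `(A,V,χ)` is a twisted space:
`χ ∘ (id_V ⊗ μ_A) = (μ_A ⊗ id_V) ∘ (id_A ⊗ χ) ∘ (χ ⊗ id_A)` (stated on pure tensors). -/
def IsTwisting (χ : V ⊗[k] A →ₗ[k] A ⊗[k] V) : Prop :=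
  ∀ (v : V) (a b : A), χ (v ⊗ₜ[k] (a * b)) = ract χ b (χ (v ⊗ₜ[k] a))

/-- `∇_χ(x) := x · 1_A`. -/
def nabla (χ : V ⊗[k] A →ₗ[k] A ⊗[k] V) : A ⊗[k] V →ₗ[k] A ⊗[k] V :=
  ract χ 1

/-- `A × V := ∇_χ(A ⊗ V)`. -/
def AxV (χ : V ⊗[k] A →ₗ[k] A ⊗[k] V) : Submodule k (A ⊗[k] V) :=
  LinearMap.range (nabla χ)

/-- `X_χ := {x ∈ A ⊗ V : x · 1_A = 0}`. -/
def Xchi (χ : V ⊗[k] A →ₗ[k] A ⊗[k] V) : Submodule k (A ⊗[k] V) :=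
  LinearMap.ker (nabla χ)

/-- `μ_𝓔 := (μ_A ⊗ id_V) ∘ (μ_A ⊗ F) ∘ (id_A ⊗ χ ⊗ id_V)`. -/
def muE (χ : V ⊗[k] A →ₗ[k] A ⊗[k] V) (F : V ⊗[k] V →ₗ[k] A ⊗[k] V) :
    (A ⊗[k] V) ⊗[k] (A ⊗[k] V) →ₗ[k] A ⊗[k] V :=
  actMap ∘ₗ
  LinearMap.lTensor A (actMap) ∘ₗ
  LinearMap.lTensor A (LinearMap.lTensor A F ∘ₗ (TensorProduct.assoc k A V V).toLinearMap) ∘ₗ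
  LinearMap.lTensor A (LinearMap.rTensor V χ) ∘ₗ
  LinearMap.lTensor A (TensorProduct.assoc k V A V).symm.toLinearMap ∘ₗ
  (TensorProduct.assoc k A V (A ⊗[k] V)).toLinearMap

/-- The twisted module condition (stated on pure tensors). -/
def TwistedModuleCond (χ : V ⊗[k] A →ₗ[k] A ⊗[k] V) (F : V ⊗[k] V →ₗ[k] A ⊗[k] V) : Prop :=
  ∀ (v w : V) (a : A),
    ract χ a (F (v ⊗ₜ[k] w)) = muE χ F (((1 : A) ⊗ₜ[k] v) ⊗ₜ[k] χ (w ⊗ₜ[k] a))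

/-- The cocycle condition (stated on pure tensors). -/
def CocycleCond (χ : V ⊗[k] A →ₗ[k] A ⊗[k] V) (F : V ⊗[k] V →ₗ[k] A ⊗[k] V) : Prop :=
  ∀ (v w u : V),
    smulMap (F ∘ₗ (TensorProduct.mk k V V).flip u) (F (v ⊗ₜ[k] w)) =
      muE χ F (((1 : A) ⊗ₜ[k] v) ⊗ₜ[k] F (w ⊗ₜ[k] u))

/-- Preunit condition (i). -/
def Preunit1 (χ : V ⊗[k] A →ₗ[k] A ⊗[k] V) (F : V ⊗[k] V →ₗ[k] A ⊗[k] V)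
    (ν : A ⊗[k] V) : Prop :=
  ∀ v : V, muE χ F (((1 : A) ⊗ₜ[k] v) ⊗ₜ[k] ν) = nabla χ ((1 : A) ⊗ₜ[k] v)

/-- Preunit condition (ii). -/
def Preunit2 (χ : V ⊗[k] A →ₗ[k] A ⊗[k] V) (F : V ⊗[k] V →ₗ[k] A ⊗[k] V)
    (ν : A ⊗[k] V) : Prop :=
  ∀ v : V, smulMap (F ∘ₗ (TensorProduct.mk k V V).flip v) ν = nabla χ ((1 : A) ⊗ₜ[k] v)

/-- Preunit condition (iii). -/
def Preunit3 (χ : V ⊗[k] A →ₗ[k] A ⊗[k] V) (ν : A ⊗[k] V) : Prop :=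
  ∀ a : A, ract χ a ν = a • ν

/-- `γ(v) := ∇_χ(1_A ⊗ v)`. -/
def gammaMap (χ : V ⊗[k] A →ₗ[k] A ⊗[k] V) : V → A ⊗[k] V :=
  fun v => nabla χ ((1 : A) ⊗ₜ[k] v)

/-- `j'_ν(a) := a · ν(1)`. -/
def jnu' (ν : A ⊗[k] V) : A → A ⊗[k] V := fun a => a • ν

/-- `j_ν(a) := ∇_χ(j'_ν(a))`. -/
def jnu (χ : V ⊗[k] A →ₗ[k] A ⊗[k] V) (ν : A ⊗[k] V) : A → A ⊗[k] V :=
  fun a => nabla χ (a • ν)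

/-- The image of `R ⊗ₖ V` in `A ⊗ₖ V`. -/
def RV (R : Subalgebra k A) : Submodule k (A ⊗[k] V) :=
  LinearMap.range (LinearMap.rTensor V R.val.toLinearMap)


section Aux

variable (χ : V ⊗[k] A →ₗ[k] A ⊗[k] V) (F : V ⊗[k] V →ₗ[k] A ⊗[k] V) (ν : A ⊗[k] V)

lemma smulMap_tmul (g : V →ₗ[k] A ⊗[k] V) (a : A) (u : V) :
    smulMap g (a ⊗ₜ[k] u) = a • g u := rfl

lemma actMap_tmul (a : A) (x : A ⊗[k] V) : actMap (a ⊗ₜ[k] x) = a • x := rfl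

lemma smulMap_smul (g : V →ₗ[k] A ⊗[k] V) (a : A) (x : A ⊗[k] V) :
    smulMap g (a • x) = a • smulMap g x := by
  induction x using TensorProduct.induction_on with
  | zero => simp
  | tmul b u => rw [smul_tmul', smulMap_tmul, smulMap_tmul, smul_eq_mul, mul_smul]
  | add x y hx hy => rw [smul_add, map_add, hx, hy, map_add, smul_add]

lemma ract_tmul (a' a : A) (v : V) : ract χ a' (a ⊗ₜ[k] v) = a • χ (v ⊗ₜ[k] a') := rfl

lemma ract_smul (a' a : A) (x : A ⊗[k] V) :
    ract χ a' (a • x) = a • ract χ a' x := smulMap_smul _ a x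

lemma nabla_tmul (a : A) (v : V) : nabla χ (a ⊗ₜ[k] v) = a • χ (v ⊗ₜ[k] (1 : A)) := rfl

lemma nabla_smul (a : A) (x : A ⊗[k] V) :
    nabla χ (a • x) = a • nabla χ x := smulMap_smul _ a x

lemma ract_ract (hχ : IsTwisting χ) (b c : A) (x : A ⊗[k] V) :
    ract χ c (ract χ b x) = ract χ (b * c) x := by
  induction x using TensorProduct.induction_on with
  | zero => simp
  | tmul a v => rw [ract_tmul, ract_smul, ract_tmul, ← hχ v b c]
  | add x y hx hy => rw [map_add, map_add, hx, hy, map_add]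

lemma aux_act (w : V) (y : A ⊗[k] V) :
    actMap (LinearMap.lTensor A F ((TensorProduct.assoc k A V V) (y ⊗ₜ[k] w))) =
      smulMap (F ∘ₗ (TensorProduct.mk k V V).flip w) y := by
  induction y using TensorProduct.induction_on with
  | zero => simp
  | tmul c u => rw [TensorProduct.assoc_tmul, LinearMap.lTensor_tmul]; rfl
  | add x y hx hy => simp [TensorProduct.add_tmul, hx, hy]

lemma muE_tmul (a : A) (v : V) (b : A) (w : V) :
    muE χ F ((a ⊗ₜ[k] v) ⊗ₜ[k] (b ⊗ₜ[k] w)) =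
      a • smulMap (F ∘ₗ (TensorProduct.mk k V V).flip w) (χ (v ⊗ₜ[k] b)) := by
  simp only [muE, LinearMap.comp_apply, LinearEquiv.coe_coe, TensorProduct.assoc_tmul,
    LinearMap.lTensor_tmul, TensorProduct.assoc_symm_tmul, LinearMap.rTensor_tmul]
  rw [aux_act]
  rfl

lemma muE_tmul' (z : A ⊗[k] V) (b : A) (w : V) :
    muE χ F (z ⊗ₜ[k] (b ⊗ₜ[k] w)) =
      smulMap (F ∘ₗ (TensorProduct.mk k V V).flip w) (ract χ b z) := by
  induction z using TensorProduct.induction_on with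
  | zero => simp
  | tmul a v => rw [muE_tmul, ract_tmul, smulMap_smul]
  | add x y hx hy =>
      rw [TensorProduct.add_tmul, map_add, hx, hy, map_add, map_add]

lemma muE_smul_left (a : A) (x y : A ⊗[k] V) :
    muE χ F ((a • x) ⊗ₜ[k] y) = a • muE χ F (x ⊗ₜ[k] y) := by
  induction y using TensorProduct.induction_on with
  | zero => simp
  | tmul b w => rw [muE_tmul', muE_tmul', ract_smul, smulMap_smul]
  | add y₁ y₂ h1 h2 =>
      rw [TensorProduct.tmul_add, TensorProduct.tmul_add, map_add, map_add, h1, h2, smul_add]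

lemma muE_smul_right (hχ : IsTwisting χ) (b : A) (x y : A ⊗[k] V) :
    muE χ F (x ⊗ₜ[k] (b • y)) = muE χ F (ract χ b x ⊗ₜ[k] y) := by
  induction y using TensorProduct.induction_on with
  | zero => simp
  | tmul c w =>
      rw [smul_tmul', smul_eq_mul, muE_tmul', muE_tmul', ract_ract χ hχ]
  | add y₁ y₂ h1 h2 =>
      rw [smul_add, TensorProduct.tmul_add, TensorProduct.tmul_add, map_add, map_add, h1, h2]

lemma nu_fixed (hν3 : Preunit3 χ ν) : nabla χ ν = ν := by
  have := hν3 1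
  rwa [one_smul] at this

lemma nabla_idem (hχ : IsTwisting χ) (x : A ⊗[k] V) :
    nabla χ (nabla χ x) = nabla χ x := by
  induction x using TensorProduct.induction_on with
  | zero => simp
  | tmul a v =>
      rw [nabla_tmul, nabla_smul]
      have : nabla χ (χ (v ⊗ₜ[k] (1 : A))) = χ (v ⊗ₜ[k] ((1 : A) * 1)) := (hχ v 1 1).symm
      rw [this, one_mul]
  | add x y hx hy => rw [map_add, map_add, hx, hy]

lemma jnu_eq (hν3 : Preunit3 χ ν) (r : A) : jnu χ ν r = r • ν := by
  show nabla χ (r • ν) = r • ν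
  rw [nabla_smul, nu_fixed χ ν hν3]

lemma gamma_eq (v : V) : gammaMap χ v = χ (v ⊗ₜ[k] (1 : A)) := by
  show nabla χ ((1 : A) ⊗ₜ[k] v) = _
  rw [nabla_tmul, one_smul]

lemma muE_nu_right (hν1 : Preunit1 χ F ν) (z : A ⊗[k] V) :
    muE χ F (z ⊗ₜ[k] ν) = nabla χ z := by
  induction z using TensorProduct.induction_on with
  | zero => simp
  | tmul a u =>
      have h : a ⊗ₜ[k] u = a • ((1 : A) ⊗ₜ[k] u) := by
        rw [smul_tmul', smul_eq_mul, mul_one]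
      rw [h, muE_smul_left, hν1 u, ← nabla_smul]
  | add x y hx hy => rw [TensorProduct.add_tmul, map_add, hx, hy, map_add]

lemma muE_nu_left (hν2 : Preunit2 χ F ν) (hν3 : Preunit3 χ ν) (y : A ⊗[k] V) :
    muE χ F (ν ⊗ₜ[k] y) = nabla χ y := by
  induction y using TensorProduct.induction_on with
  | zero => simp
  | tmul b w =>
      rw [muE_tmul', hν3 b, smulMap_smul, hν2 w, nabla_tmul, nabla_tmul, one_smul]
  | add x y hx hy => rw [TensorProduct.tmul_add, map_add, hx, hy, map_add]

lemma key1 (hχ : IsTwisting χ) (hν1 : Preunit1 χ F ν) (hν3 : Preunit3 χ ν) (v : V) (r : A) :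
    muE χ F (gammaMap χ v ⊗ₜ[k] jnu χ ν r) = nabla χ (χ (v ⊗ₜ[k] r)) := by
  rw [jnu_eq χ ν hν3, gamma_eq, muE_smul_right χ F hχ, ← hχ v 1 r, one_mul,
    muE_nu_right χ F ν hν1]

lemma key2 (hχ : IsTwisting χ) (hν2 : Preunit2 χ F ν) (hν3 : Preunit3 χ ν) (r : A) (v : V) :
    muE χ F (jnu χ ν r ⊗ₜ[k] gammaMap χ v) = nabla χ (r ⊗ₜ[k] v) := by
  rw [jnu_eq χ ν hν3, muE_smul_left, muE_nu_left χ F ν hν2 hν3]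
  show r • nabla χ (nabla χ ((1:A) ⊗ₜ[k] v)) = _
  rw [nabla_idem χ hχ, ← nabla_smul, smul_tmul', smul_eq_mul, mul_one]

variable (R : Subalgebra k A)

lemma rv_tmul {r : A} (hr : r ∈ R) (v : V) : r ⊗ₜ[k] v ∈ (RV R : Submodule k (A ⊗[k] V)) :=
  ⟨(⟨r, hr⟩ : R) ⊗ₜ[k] v, rfl⟩

lemma rv_smul {r : A} (hr : r ∈ R) {x : A ⊗[k] V} (hx : x ∈ (RV R : Submodule k (A ⊗[k] V))) :
    r • x ∈ (RV R : Submodule k (A ⊗[k] V)) := by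
  obtain ⟨y, rfl⟩ := hx
  induction y using TensorProduct.induction_on with
  | zero => simp
  | tmul s v =>
      rw [LinearMap.rTensor_tmul, smul_tmul', smul_eq_mul]
      exact rv_tmul R (R.mul_mem hr s.2) v
  | add x y hx hy =>
      rw [map_add, smul_add]
      exact Submodule.add_mem _ hx hy

lemma rv_nabla (hstab : ∀ (v : V) (r : A), r ∈ R → χ (v ⊗ₜ[k] r) ∈ (RV R : Submodule k (A ⊗[k] V)))
    {x : A ⊗[k] V} (hx : x ∈ (RV R : Submodule k (A ⊗[k] V))) :
    nabla χ x ∈ (RV R : Submodule k (A ⊗[k] V)) := by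
  obtain ⟨y, rfl⟩ := hx
  induction y using TensorProduct.induction_on with
  | zero => simp
  | tmul s v =>
      rw [LinearMap.rTensor_tmul]
      show nabla χ ((s : A) ⊗ₜ[k] v) ∈ _
      rw [nabla_tmul]
      exact rv_smul R s.2 (hstab v 1 R.one_mem)
  | add x y hx hy =>
      rw [map_add, map_add]
      exact Submodule.add_mem _ hx hy

end Aux

theorem statement_16 (χ : V ⊗[k] A →ₗ[k] A ⊗[k] V) (F : V ⊗[k] V →ₗ[k] A ⊗[k] V)
    (ν : A ⊗[k] V)
    (hχ : IsTwisting χ) (hF : ∀ x : V ⊗[k] V, F x ∈ AxV χ)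
    (hν1 : Preunit1 χ F ν) (hν2 : Preunit2 χ F ν) (hν3 : Preunit3 χ ν)
    (htm : TwistedModuleCond χ F) (hcoc : CocycleCond χ F)
    (R : Subalgebra k A)
    (hstab : ∀ (v : V) (r : A), r ∈ R → χ (v ⊗ₜ[k] r) ∈ RV R) :
    (Submodule.span k
        {x : A ⊗[k] V | ∃ r ∈ R, ∃ v : V, x = muE χ F (gammaMap χ v ⊗ₜ[k] jnu χ ν r)} ≤
      RV R ⊓ AxV χ) ∧
    (RV R ⊓ AxV χ =
      Submodule.span k
        {x : A ⊗[k] V | ∃ r ∈ R, ∃ v : V, x = muE χ F (jnu χ ν r ⊗ₜ[k] gammaMap χ v)}) := by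
  constructor
  · rw [Submodule.span_le]
    rintro x ⟨r, hr, v, rfl⟩
    rw [key1 χ F ν hχ hν1 hν3 v r]
    exact ⟨rv_nabla χ R hstab (hstab v r hr), ⟨χ (v ⊗ₜ[k] r), rfl⟩⟩
  · apply le_antisymm
    · rintro x ⟨hx1, hx2⟩
      obtain ⟨z, hz⟩ := hx2
      have hfix : nabla χ x = x := by rw [← hz, nabla_idem χ hχ]
      obtain ⟨y, hy⟩ := hx1
      rw [← hfix, ← hy]
      clear hfix hy hz
      induction y using TensorProduct.induction_on with
      | zero => simp
      | tmul s v =>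
          apply Submodule.subset_span
          refine ⟨(s : A), s.2, v, ?_⟩
          rw [key2 χ F ν hχ hν2 hν3]
          rfl
      | add y₁ y₂ h1 h2 =>
          rw [map_add, map_add]
          exact Submodule.add_mem _ h1 h2
    · rw [Submodule.span_le]
      rintro x ⟨r, hr, v, rfl⟩
      rw [key2 χ F ν hχ hν2 hν3]
      exact ⟨rv_nabla χ R hstab (rv_tmul R hr v), ⟨r ⊗ₜ[k] v, rfl⟩⟩


end WeakCrossedProduct
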